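/- Let μ be a critical offspring distribution on ℤ≥0 (mean 1, μ(1) < 1) with gcd of support equal to d, and let T be a Galton-Watson tree with offspring distribution μ. Then P(#T = 1 + dn) = (1/(1+dn)) · P(S_{1+dn} = −1), where (S_n) is the random walk with i.i.d. steps distributed as the offspring minus 1. More generally, for a forest of k independent such trees, P(#F = k + dn) = (k/(k+dn)) · P(S_{k+dn} = −k). -/

import Mathlib

/-- Finite ordered (plane) trees. -/
inductive PTree : Type
  | node : List PTree → PTree

mutual
  /-- Number of vertices of a plane tree. -/
  def PTree.size : PTree → ℕ
    | .node l => 1 + PTree.sizeList l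
  def PTree.sizeList : List PTree → ℕ
    | [] => 0
    | t :: ts => PTree.size t + PTree.sizeList ts
end

mutual
  /-- Galton-Watson weight of a plane tree: product over vertices of μ(number of children). -/
  noncomputable def PTree.weight (μ : ℕ → ℝ) : PTree → ℝ
    | .node l => μ l.length * PTree.weightList μ l
  noncomputable def PTree.weightList (μ : ℕ → ℝ) : List PTree → ℝ
    | [] => 1
    | t :: ts => PTree.weight μ t * PTree.weightList μ ts
end

/-!
A forest of `k` plane trees is encoded by its Łukasiewicz word, the out-degrees of its vertices
in depth-first order. This is a bijection onto the words whose walk `S_j = ∑_{i<j} (c_i - 1)`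
first reaches `-k` at the last letter, and it carries the Galton–Watson weight to `∏ μ (c_i)`.
By the cycle lemma, exactly `k` of the `N` cyclic rotations of any word of length `N` and letter
sum `N - k` are Łukasiewicz words, and rotations preserve `∏ μ (c_i)`; averaging over the
rotations gives the factor `k / N`.
-/

open Finset

namespace List

/-- The walk `S` of the statement, with the letters of `c` as offspring numbers. -/
def prefixWalk (c : List ℕ) (j : ℕ) : ℤ :=
  ((c.take j).sum : ℤ) - j

/-- `c` is the Łukasiewicz word of a forest of `k` trees: its path first reaches `-k` at the end. -/
def IsLukasiewicz (k : ℕ) (c : List ℕ) : Prop :=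
  c.prefixWalk c.length = -k ∧ ∀ j < c.length, -(k : ℤ) < c.prefixWalk j

instance (k : ℕ) (c : List ℕ) : Decidable (c.IsLukasiewicz k) := by
  unfold IsLukasiewicz; infer_instance

@[simp]
lemma prefixWalk_zero (c : List ℕ) : c.prefixWalk 0 = 0 := by
  simp [prefixWalk]

lemma prefixWalk_length (c : List ℕ) : c.prefixWalk c.length = c.sum - c.length := by
  simp [prefixWalk]

lemma prefixWalk_sub_one_le_succ (c : List ℕ) (j : ℕ) :
    c.prefixWalk j - 1 ≤ c.prefixWalk (j + 1) := by
  have : (c.take j).sum ≤ (c.take (j + 1)).sum := by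
    rw [take_add_one, sum_append]; exact Nat.le_add_right _ _
  simp only [prefixWalk, Nat.cast_add, Nat.cast_one]
  omega

lemma prefixWalk_append_of_le_length {a : List ℕ} (b : List ℕ) {j : ℕ} (hj : j ≤ a.length) :
    (a ++ b).prefixWalk j = a.prefixWalk j := by
  rw [prefixWalk, take_append_of_le_length hj, prefixWalk]

lemma prefixWalk_append_length_add (a b : List ℕ) (j : ℕ) :
    (a ++ b).prefixWalk (a.length + j) = a.prefixWalk a.length + b.prefixWalk j := by
  simp only [prefixWalk, take_append, take_length, Nat.add_sub_cancel_left, sum_append]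
  have : take (a.length + j) a = a := take_of_length_le (by omega)
  rw [this]
  push_cast
  ring

lemma prefixWalk_cons_succ (m : ℕ) (c : List ℕ) (j : ℕ) :
    (m :: c).prefixWalk (j + 1) = m - 1 + c.prefixWalk j := by
  rw [add_comm j 1, ← singleton_append]
  rw [show 1 + j = [m].length + j from rfl, prefixWalk_append_length_add]
  simp [prefixWalk]

end List

lemma exists_first_hit {W : ℕ → ℤ} (hstep : ∀ j, W j - 1 ≤ W (j + 1)) {v : ℤ}
    (h0 : v ≤ W 0) {n : ℕ} (hn : W n ≤ v) : ∃ m ≤ n, W m = v ∧ ∀ j < m, v < W j := by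
  classical
  have hex : ∃ m, W m ≤ v := ⟨n, hn⟩
  refine ⟨Nat.find hex, Nat.find_min' hex hn, ?_, fun j hj => not_le.mp (Nat.find_min hex hj)⟩
  rcases h : Nat.find hex with _ | m
  · have := Nat.find_spec hex; rw [h] at this; omega
  · have hlt := Nat.find_min hex (show m < Nat.find hex by omega)
    have := Nat.find_spec hex
    rw [h] at this
    have := hstep m
    omega

namespace List.IsLukasiewicz

variable {k m : ℕ} {a b : List ℕ}

lemma sum_add_eq_length (h : a.IsLukasiewicz k) : a.sum + k = a.length := by
  have := h.1
  rw [prefixWalk_length] at this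
  omega

lemma cons_append (ha : a.IsLukasiewicz m) (hb : b.IsLukasiewicz k) :
    (m :: (a ++ b)).IsLukasiewicz (k + 1) := by
  have hwalk (j : ℕ) : (m :: (a ++ b)).prefixWalk (j + 1) = m - 1 + (a ++ b).prefixWalk j :=
    prefixWalk_cons_succ m _ j
  have hb' (j : ℕ) : (a ++ b).prefixWalk (a.length + j) = -m + b.prefixWalk j := by
    rw [prefixWalk_append_length_add, ha.1]
  refine ⟨?_, fun j hj => ?_⟩
  · rw [length_cons, length_append, hwalk, hb', hb.1]
    push_cast; ring
  · rcases j with _ | j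
    · simp only [prefixWalk_zero]; omega
    rw [hwalk]
    rcases lt_or_ge j a.length with hja | hja
    · rw [prefixWalk_append_of_le_length b hja.le]
      have := ha.2 j hja
      omega
    · obtain ⟨i, rfl⟩ := Nat.exists_eq_add_of_le hja
      rw [hb']
      have := hb.2 i (by simp at hj; omega)
      omega

/-- The first tree of a forest is read off the first time the path of the remaining
word drops by the root degree `m`. -/
lemma exists_of_cons {c : List ℕ} (h : (m :: c).IsLukasiewicz k) :
    ∃ a b, c = a ++ b ∧ a.IsLukasiewicz m ∧ b.IsLukasiewicz (k - 1) := by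
  have hwalk (j : ℕ) : (m :: c).prefixWalk (j + 1) = m - 1 + c.prefixWalk j :=
    prefixWalk_cons_succ m c j
  have hk : 1 ≤ k := by have := h.2 0 (by simp); simp at this; omega
  have hend : c.prefixWalk c.length = 1 - k - m := by
    have := h.1; rw [length_cons, hwalk] at this; omega
  obtain ⟨j₀, hj₀, hhit, hbefore⟩ :=
    exists_first_hit (prefixWalk_sub_one_le_succ c) (v := -m) (by simp) (n := c.length)
      (by omega)
  obtain ⟨a, b, rfl, rfl⟩ : ∃ a b, c = a ++ b ∧ a.length = j₀ :=
    ⟨c.take j₀, c.drop j₀, (take_append_drop j₀ c).symm, length_take_of_le hj₀⟩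
  have ha (j : ℕ) (hj : j ≤ a.length) : (a ++ b).prefixWalk j = a.prefixWalk j :=
    prefixWalk_append_of_le_length b hj
  have hb (j : ℕ) : (a ++ b).prefixWalk (a.length + j) = -m + b.prefixWalk j := by
    rw [prefixWalk_append_length_add, ← ha _ le_rfl, hhit]
  refine ⟨a, b, rfl, ⟨?_, fun j hj => ?_⟩, ⟨?_, fun j hj => ?_⟩⟩
  · rw [← ha _ le_rfl, hhit]
  · rw [← ha _ hj.le]
    exact hbefore j hj
  · have := hb b.length
    rw [← length_append, hend] at this
    push_cast [hk]
    omega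
  · have := h.2 (a.length + j + 1) (by simp at hj ⊢; omega)
    rw [hwalk, hb] at this
    push_cast [hk]
    omega

lemma left_eq_of_append_eq {a' x y : List ℕ} (ha : a.IsLukasiewicz k)
    (ha' : a'.IsLukasiewicz k) (h : a ++ x = a' ++ y) : a = a' := by
  wlog hle : a.length ≤ a'.length generalizing a a' x y
  · exact (this ha' ha h.symm (by omega)).symm
  have hpre : a <+: a' :=
    prefix_of_prefix_length_le (h ▸ prefix_append a x) (prefix_append a' y) hle
  obtain ⟨t, rfl⟩ := hpre
  rcases t with _ | ⟨z, t⟩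
  · simp
  · have hlt : a.length < (a ++ z :: t).length := by simp
    have := ha'.2 _ hlt
    rw [prefixWalk_append_of_le_length _ le_rfl, ha.1] at this
    exact (lt_irrefl _ this).elim

end List.IsLukasiewicz

namespace PTree

def lukasiewicz : List PTree → List ℕ
  | [] => []
  | .node l :: ts => l.length :: (lukasiewicz l ++ lukasiewicz ts)

lemma length_lukasiewicz (f : List PTree) : (lukasiewicz f).length = sizeList f := by
  induction f using lukasiewicz.induct with
  | case1 => simp [lukasiewicz, sizeList]
  | case2 l ts ihl ihts => simp [lukasiewicz, sizeList, size, ihl, ihts]; omega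

lemma prod_map_lukasiewicz (μ : ℕ → ℝ) (f : List PTree) :
    ((lukasiewicz f).map μ).prod = weightList μ f := by
  induction f using lukasiewicz.induct with
  | case1 => simp [lukasiewicz, weightList]
  | case2 l ts ihl ihts => simp [lukasiewicz, weightList, weight, ihl, ihts]; ring

lemma isLukasiewicz_lukasiewicz (f : List PTree) : (lukasiewicz f).IsLukasiewicz f.length := by
  induction f using lukasiewicz.induct with
  | case1 => simp [lukasiewicz, List.IsLukasiewicz]
  | case2 l ts ihl ihts => rw [lukasiewicz, List.length_cons]; exact ihl.cons_append ihts

lemma lukasiewicz_injective : Function.Injective lukasiewicz := by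
  intro f g h
  induction f using lukasiewicz.induct generalizing g with
  | case1 => cases g with
    | nil => rfl
    | cons t ts => cases t; simp [lukasiewicz] at h
  | case2 l ts ihl ihts => cases g with
    | nil => simp [lukasiewicz] at h
    | cons t ts' =>
      rcases t with ⟨l'⟩
      simp only [lukasiewicz, List.cons.injEq] at h
      obtain ⟨hlen, happ⟩ := h
      have hl := (isLukasiewicz_lukasiewicz l).left_eq_of_append_eq
        (hlen ▸ isLukasiewicz_lukasiewicz l') happ
      rw [ihl hl, ihts (List.append_cancel_left (hl ▸ happ))]

lemma exists_lukasiewicz_eq {k : ℕ} {c : List ℕ} (h : c.IsLukasiewicz k) :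
    ∃ f : List PTree, f.length = k ∧ lukasiewicz f = c := by
  induction hn : c.length using Nat.strong_induction_on generalizing k c with
  | _ n ih =>
    rcases c with _ | ⟨m, c⟩
    · refine ⟨[], ?_, by rw [lukasiewicz]⟩
      simpa [List.IsLukasiewicz, eq_comm] using h.1
    obtain ⟨a, b, rfl, ha, hb⟩ := h.exists_of_cons
    have hk : 1 ≤ k := by have := h.2 0 (by simp); simp at this; omega
    obtain ⟨l, rfl, rfl⟩ := ih a.length (by simp at hn; omega) ha rfl
    obtain ⟨ts, hts, rfl⟩ := ih b.length (by simp at hn; omega) hb rfl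
    exact ⟨.node l :: ts, by simp; omega, by rw [lukasiewicz]⟩

end PTree

namespace List

variable {c : List ℕ} {k : ℕ}

lemma prefixWalk_append_self_add_length (hsum : c.sum + k = c.length) {j : ℕ}
    (hj : j ≤ c.length) : (c ++ c).prefixWalk (j + c.length) = (c ++ c).prefixWalk j - k := by
  rw [add_comm, prefixWalk_append_length_add, prefixWalk_append_of_le_length _ hj,
    prefixWalk_length]
  omega

lemma prefixWalk_rotate {i p : ℕ} (hi : i ≤ c.length) (hp : p ≤ c.length) :
    (c.rotate i).prefixWalk p = (c ++ c).prefixWalk (i + p) - (c ++ c).prefixWalk i := by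
  have hcc : c ++ c = c.take i ++ (c.rotate i ++ c.drop i) := by
    rw [rotate_eq_drop_append_take hi]
    simp only [append_assoc, take_append_drop]
    rw [← append_assoc, take_append_drop]
  have hlen : (c.take i).length = i := length_take_of_le hi
  have hfront := prefixWalk_append_of_le_length (c.rotate i ++ c.drop i) hlen.ge
  have hback := prefixWalk_append_length_add (c.take i) (c.rotate i ++ c.drop i) p
  rw [hlen] at hback
  rw [hcc, hback, hfront, prefixWalk_append_of_le_length _ (by simpa using hp)]
  ring

lemma isLukasiewicz_rotate_iff (hsum : c.sum + k = c.length) {i : ℕ} (hi : i < c.length) :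
    (c.rotate i).IsLukasiewicz k ↔
      ∀ j < i + c.length, (c ++ c).prefixWalk (i + c.length) < (c ++ c).prefixWalk j := by
  have htotal : (c.rotate i).prefixWalk c.length = -k := by
    have := prefixWalk_length (c.rotate i)
    rw [length_rotate, (rotate_perm c i).sum_eq] at this
    omega
  simp only [IsLukasiewicz, htotal, true_and, length_rotate]
  set N := c.length
  set W := (c ++ c).prefixWalk
  have hper (j : ℕ) (hj : j ≤ N) : W (j + N) = W j - k :=
    prefixWalk_append_self_add_length hsum hj
  have hend := hper i hi.le
  have hwalk (p : ℕ) (hp : p ≤ N) : (c.rotate i).prefixWalk p = W (i + p) - W i :=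
    prefixWalk_rotate hi.le hp
  constructor
  · intro h j hj
    rcases le_or_gt i j with hij | hji
    · obtain ⟨p, rfl⟩ := Nat.exists_eq_add_of_le hij
      have := h p (by omega)
      rw [hwalk p (by omega)] at this
      omega
    · have := h (j + N - i) (by omega)
      rw [hwalk _ (by omega), show i + (j + N - i) = j + N by omega, hper j (by omega)] at this
      omega
  · intro h p hp
    have := h (i + p) (by omega)
    rw [hwalk p hp.le]
    omega

/-- The cycle lemma. The good rotations correspond to the levels `min W - 1, …, min W - k`
of the path `W` of `c ++ c`, through the first time `W` reaches them. -/
lemma card_filter_isLukasiewicz_rotate (hsum : c.sum + k = c.length) :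
    #{i ∈ Finset.range c.length | (c.rotate i).IsLukasiewicz k} = k := by
  set N := c.length
  set W := (c ++ c).prefixWalk
  rcases Nat.eq_zero_or_pos N with hN | hN
  · simp only [hN, Finset.range_zero, Finset.filter_empty, Finset.card_empty]
    omega
  obtain ⟨jm, hjm, hmin⟩ := Finset.exists_min_image (Finset.range N) W ⟨0, by simpa using hN⟩
  have hjmN : jm < N := Finset.mem_range.mp hjm
  have hper (j : ℕ) (hj : j ≤ N) : W (j + N) = W j - k :=
    prefixWalk_append_self_add_length hsum hj
  have hrot (i : ℕ) : i ∈ {i ∈ Finset.range N | (c.rotate i).IsLukasiewicz k} ↔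
      i < N ∧ ∀ j < i + N, W (i + N) < W j := by
    rw [Finset.mem_filter, Finset.mem_range]
    exact and_congr_right (isLukasiewicz_rotate_iff hsum)
  have hinj : Set.InjOn (fun i => W (i + N))
      ({i ∈ Finset.range N | (c.rotate i).IsLukasiewicz k} : Finset ℕ) := by
    intro i₁ h₁ i₂ h₂ heq
    rw [Finset.mem_coe, hrot] at h₁ h₂
    simp only at heq
    rcases lt_trichotomy i₁ i₂ with h | h | h
    · have := h₂.2 (i₁ + N) (by omega); omega
    · exact h
    · have := h₁.2 (i₂ + N) (by omega); omega
  have himage : Finset.image (fun i => W (i + N))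
      {i ∈ Finset.range N | (c.rotate i).IsLukasiewicz k} = Finset.Ico (W jm - k) (W jm) := by
    ext v
    simp only [Finset.mem_image, hrot, Finset.mem_Ico]
    constructor
    · rintro ⟨i, ⟨hi, hrec⟩, rfl⟩
      have := hmin i (Finset.mem_range.mpr hi)
      have := hper i hi.le
      have := hrec jm (by omega)
      omega
    · rintro ⟨hlo, hhi⟩
      have hW0 := hmin 0 (Finset.mem_range.mpr hN)
      have hW00 : W 0 = 0 := prefixWalk_zero _
      have hjmN' := hper jm hjmN.le
      obtain ⟨m, hm, hWm, hbefore⟩ := exists_first_hit (W := W) (prefixWalk_sub_one_le_succ _)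
        (v := v) (by omega) (n := jm + N) (by omega)
      have hNm : N ≤ m := by
        by_contra! hmN
        have := hmin m (Finset.mem_range.mpr hmN)
        omega
      refine ⟨m - N, ⟨by omega, ?_⟩, ?_⟩ <;> rw [Nat.sub_add_cancel hNm]
      · intro j hj; rw [hWm]; exact hbefore j hj
      · exact hWm
  rw [← Finset.card_image_of_injOn hinj, himage, Int.card_Ico]
  omega

end List

/-- Double counting over the pairs (word, rotation): each word has exactly `k` Łukasiewicz
rotations, and each rotation permutes `s`. -/
theorem length_nsmul_sum_filter_isLukasiewicz {M : Type*} [AddCommMonoid M]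
    {s : Finset (List ℕ)} {k N : ℕ} (hs : ∀ l ∈ s, l.length = N ∧ l.sum + k = N)
    (hrot : ∀ l ∈ s, ∀ i, l.rotate i ∈ s) (w : List ℕ → M)
    (hw : ∀ l ∈ s, ∀ i, w (l.rotate i) = w l) :
    N • ∑ l ∈ s with l.IsLukasiewicz k, w l = k • ∑ l ∈ s, w l := by
  have hrot_inv (l : List ℕ) (hl : l ∈ s) {i j : ℕ} (hij : i + j = N) :
      (l.rotate i).rotate j = l := by
    rw [List.rotate_rotate, hij, ← (hs l hl).1, List.rotate_length]
  symm
  calc k • ∑ l ∈ s, w l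
      = ∑ l ∈ s, ∑ i ∈ range N, if (l.rotate i).IsLukasiewicz k then w l else 0 := by
        rw [smul_sum]
        refine sum_congr rfl fun l hl => ?_
        obtain ⟨hlen, hsum⟩ := hs l hl
        rw [← sum_filter, sum_const, ← hlen, List.card_filter_isLukasiewicz_rotate (hlen ▸ hsum)]
    _ = ∑ i ∈ range N, ∑ l ∈ s,
          if (l.rotate i).IsLukasiewicz k then w (l.rotate i) else 0 := by
        rw [sum_comm]
        refine sum_congr rfl fun i _ => sum_congr rfl fun l hl => ?_
        rw [hw l hl]
    _ = ∑ i ∈ range N, ∑ l ∈ s, if l.IsLukasiewicz k then w l else 0 := by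
        refine sum_congr rfl fun i hi => ?_
        have hiN := mem_range.mp hi
        exact sum_nbij' (·.rotate i) (·.rotate (N - i)) (fun l hl => hrot l hl i)
          (fun l hl => hrot l hl _) (fun l hl => hrot_inv l hl (by omega))
          (fun l hl => hrot_inv l hl (by omega)) (fun _ _ => rfl)
    _ = N • ∑ l ∈ s with l.IsLukasiewicz k, w l := by
        rw [sum_const, card_range, sum_filter]

def wordsOfLengthSum (N R : ℕ) : Finset (List ℕ) :=
  (Nat.antidiagonalTuple N R).map ⟨List.ofFn, List.ofFn_injective⟩

lemma mem_wordsOfLengthSum {N R : ℕ} {l : List ℕ} :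
    l ∈ wordsOfLengthSum N R ↔ l.length = N ∧ l.sum = R := by
  simp only [wordsOfLengthSum, mem_map, Nat.mem_antidiagonalTuple, Function.Embedding.coeFn_mk]
  constructor
  · rintro ⟨c, hc, rfl⟩
    exact ⟨List.length_ofFn, by rw [List.sum_ofFn, hc]⟩
  · rintro ⟨rfl, hsum⟩
    exact ⟨l.get, by rw [← List.sum_ofFn, List.ofFn_get, hsum], List.ofFn_get l⟩

lemma tsum_ite_sum_eq_sum_wordsOfLengthSum (μ : ℕ → ℝ) (N R : ℕ) :
    (∑' c : Fin N → ℕ, if ∑ i, c i = R then ∏ i, μ (c i) else 0) =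
      ∑ l ∈ wordsOfLengthSum N R, (l.map μ).prod := by
  rw [wordsOfLengthSum, sum_map, tsum_eq_sum (s := Nat.antidiagonalTuple N R)]
  · refine sum_congr rfl fun c hc => ?_
    rw [if_pos (Nat.mem_antidiagonalTuple.mp hc)]
    simp [List.map_ofFn, List.prod_ofFn]
  · intro c hc
    rw [if_neg (mt Nat.mem_antidiagonalTuple.mpr hc)]

namespace PTree

lemma sizeList_ofFn {k : ℕ} (f : Fin k → PTree) : sizeList (List.ofFn f) = ∑ i, (f i).size := by
  induction k with
  | zero => simp [sizeList]
  | succ k ih => simp [List.ofFn_succ, sizeList, ih, Fin.sum_univ_succ]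

lemma weightList_ofFn (μ : ℕ → ℝ) {k : ℕ} (f : Fin k → PTree) :
    weightList μ (List.ofFn f) = ∏ i, (f i).weight μ := by
  induction k with
  | zero => simp [weightList]
  | succ k ih => simp [List.ofFn_succ, weightList, ih, Fin.prod_univ_succ]

lemma tsum_forest_eq_sum_isLukasiewicz (μ : ℕ → ℝ) (k R : ℕ) :
    (∑' f : Fin k → PTree, if ∑ i, (f i).size = k + R then ∏ i, (f i).weight μ else 0) =
      ∑ l ∈ wordsOfLengthSum (k + R) R with l.IsLukasiewicz k, (l.map μ).prod := by
  set G : List ℕ → ℝ := fun l =>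
    if l.IsLukasiewicz k ∧ l.length = k + R then (l.map μ).prod else 0
  have hinj : Function.Injective fun f : Fin k → PTree => lukasiewicz (List.ofFn f) :=
    lukasiewicz_injective.comp List.ofFn_injective
  have hrange : Function.support G ⊆ Set.range fun f : Fin k → PTree => lukasiewicz (List.ofFn f) := by
    intro l hl
    have hG : l.IsLukasiewicz k := by
      by_contra h
      exact hl (if_neg fun h' => h h'.1)
    obtain ⟨f, rfl, rfl⟩ := exists_lukasiewicz_eq hG
    exact ⟨f.get, by simp only [List.ofFn_get]⟩
  calc _ = ∑' f : Fin k → PTree, G (lukasiewicz (List.ofFn f)) := by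
        refine tsum_congr fun f => ?_
        have := isLukasiewicz_lukasiewicz (List.ofFn f)
        rw [List.length_ofFn] at this
        simp only [G, length_lukasiewicz, sizeList_ofFn, prod_map_lukasiewicz, weightList_ofFn,
          this, true_and]
    _ = ∑' l, G l := hinj.tsum_eq hrange
    _ = _ := by
      rw [tsum_eq_sum (s := {l ∈ wordsOfLengthSum (k + R) R | l.IsLukasiewicz k}), sum_congr rfl]
      · intro l hl
        rw [mem_filter, mem_wordsOfLengthSum] at hl
        exact if_pos ⟨hl.2, hl.1.1⟩
      · intro l hl
        refine if_neg fun h => hl ?_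
        rw [mem_filter, mem_wordsOfLengthSum]
        exact ⟨⟨h.2, by have := h.1.sum_add_eq_length; omega⟩, h.1⟩

end PTree

theorem tsum_forest_eq_div_mul_tsum (μ : ℕ → ℝ) {k : ℕ} (hk : 1 ≤ k) (R : ℕ) :
    (∑' f : Fin k → PTree, if ∑ i, (f i).size = k + R then ∏ i, (f i).weight μ else 0) =
      (k / (k + R : ℝ)) * ∑' c : Fin (k + R) → ℕ, if ∑ i, c i = R then ∏ i, μ (c i) else 0 := by
  have hcount := length_nsmul_sum_filter_isLukasiewicz (s := wordsOfLengthSum (k + R) R) (k := k)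
    (N := k + R) (fun l hl => by rw [mem_wordsOfLengthSum] at hl; omega)
    (fun l hl i => by
      rw [mem_wordsOfLengthSum] at hl ⊢
      exact ⟨by rw [List.length_rotate, hl.1], by rw [(l.rotate_perm i).sum_eq, hl.2]⟩)
    (fun l => (l.map μ).prod)
    (fun l _ i => by rw [List.map_rotate, ((l.map μ).rotate_perm i).prod_eq])
  rw [PTree.tsum_forest_eq_sum_isLukasiewicz, tsum_ite_sum_eq_sum_wordsOfLengthSum,
    div_mul_eq_mul_div, eq_div_iff (by positivity)]
  simp only [nsmul_eq_mul] at hcount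
  push_cast at hcount
  linarith

theorem otter_dwass_cyclic_lemma
    (μ : ℕ → ℝ) (hnn : ∀ n, 0 ≤ μ n) (hsum : ∑' n : ℕ, μ n = 1)
    (hmean : ∑' n : ℕ, (n : ℝ) * μ n = 1) (hcrit : μ 1 < 1)
    (d : ℕ) (hdpos : 0 < d)
    (hddvd : ∀ m : ℕ, μ m ≠ 0 → d ∣ m)
    (hdgcd : ∀ e : ℕ, (∀ m : ℕ, μ m ≠ 0 → e ∣ m) → e ∣ d) :
    (∀ n : ℕ,
      (∑' t : PTree, if t.size = 1 + d * n then t.weight μ else 0)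
        = (1 / (1 + d * n : ℝ)) *
          ∑' c : Fin (1 + d * n) → ℕ,
            (if ∑ i, c i = d * n then ∏ i, μ (c i) else 0)) ∧
    (∀ k : ℕ, 1 ≤ k → ∀ n : ℕ,
      (∑' f : Fin k → PTree, if ∑ i, (f i).size = k + d * n then ∏ i, (f i).weight μ else 0)
        = ((k : ℝ) / (k + d * n : ℝ)) *
          ∑' c : Fin (k + d * n) → ℕ,
            (if ∑ i, c i = d * n then ∏ i, μ (c i) else 0)) := by
  have forests (k : ℕ) (hk : 1 ≤ k) (n : ℕ) := tsum_forest_eq_div_mul_tsum μ hk (d * n)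
  push_cast at forests
  refine ⟨fun n => ?_, forests⟩
  rw [← (Equiv.funUnique (Fin 1) PTree).tsum_eq]
  simpa using forests 1 le_rfl n
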